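/- arXiv:math/0608147 — 6 statements merged into one kernel-verified Lean document; each statement's English description precedes it below -/
import Mathlib

section
/- Suppose φ_n = a_n·q_n + b_n·p_n holds in ℤ[z,t] where a_n, b_n have z-degree m−2, with p_n, q_n, φ_n as defined for odd n = 2s−1 (m = s²). Then b_n(z,t) = −z^{m−2} · a_n(z^{−1}, t), i.e., b_n is obtained from a_n by reversing the coefficient sequence in z and negating. -/
open Polynomial Finset

/- We work in ℤ[t][z]: the outer variable `X` is z, and `C X` is t. -/

/-- p_n(z,t) = ∏_{i=1}^s (1 - t z^(2i-1)), for odd n = 2s-1. -/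
noncomputable def pOdd (s : ℕ) : Polynomial (Polynomial ℤ) :=
  ∏ i ∈ Icc 1 s, (1 - C X * X ^ (2 * i - 1))

/-- q_n(z,t) = ∏_{i=1}^s (z^(2i-1) - t), for odd n = 2s-1. -/
noncomputable def qOdd (s : ℕ) : Polynomial (Polynomial ℤ) :=
  ∏ i ∈ Icc 1 s, (X ^ (2 * i - 1) - C X)

/-- r_n(t) = ∏_{i=2}^{n-1} (1 - t^(2i)), for odd n. -/
noncomputable def rOdd (n : ℕ) : Polynomial ℤ :=
  ∏ i ∈ Icc 2 (n - 1), (1 - X ^ (2 * i))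

/-- φ_n(z,t) = z^(m-2) (z²-1) r_n(t). -/
noncomputable def phiOdd (n m : ℕ) : Polynomial (Polynomial ℤ) :=
  X ^ (m - 2) * (X ^ 2 - 1) * C (rOdd n)

/-- Sum of the first s odd numbers is s². -/
lemma sum_odds (s : ℕ) : ∑ i ∈ Icc 1 s, (2 * i - 1) = s ^ 2 := by
  induction s with
  | zero => simp
  | succ s ih =>
    rw [Finset.sum_Icc_succ_top (by omega : 1 ≤ s + 1), ih]
    have h1 : 2 * (s + 1) - 1 = 2 * s + 1 := by omega
    have h2 : (s + 1) ^ 2 = s ^ 2 + (2 * s + 1) := by ring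
    rw [h1, h2]

/-- reflect of a product, given degree bounds on the factors. -/
lemma reflect_prod' {ι : Type*} {R : Type*} [CommSemiring R] (I : Finset ι)
    (f : ι → R[X]) (d : ι → ℕ) (h : ∀ i ∈ I, (f i).natDegree ≤ d i) :
    reflect (∑ i ∈ I, d i) (∏ i ∈ I, f i) = ∏ i ∈ I, reflect (d i) (f i) := by
  induction I using Finset.cons_induction with
  | empty => simp [reflect_one]
  | cons a I haI ih =>
    rw [Finset.prod_cons, Finset.sum_cons, Finset.prod_cons,
      reflect_mul _ _ (h a (Finset.mem_cons_self a I))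
        (le_trans (natDegree_prod_le _ _)
          (Finset.sum_le_sum fun i hi => h i (Finset.mem_cons_of_mem hi))),
      ih fun i hi => h i (Finset.mem_cons_of_mem hi)]

lemma natDegree_p_factor {R : Type*} [CommRing R] (t : R) (k : ℕ) :
    (1 - C t * X ^ k : R[X]).natDegree ≤ k := by
  refine le_trans (natDegree_sub_le _ _) (max_le ?_ ?_)
  · rw [natDegree_one]; exact Nat.zero_le k
  · exact le_trans (natDegree_C_mul_le _ _) (natDegree_X_pow_le k)

lemma natDegree_q_factor {R : Type*} [CommRing R] (t : R) (k : ℕ) :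
    (X ^ k - C t : R[X]).natDegree ≤ k := by
  exact le_trans (natDegree_sub_le _ _)
    (max_le (natDegree_X_pow_le k) ((natDegree_C t).le.trans (Nat.zero_le k)))

lemma reflect_p_factor {R : Type*} [CommRing R] (t : R) (k : ℕ) :
    reflect k (1 - C t * X ^ k : R[X]) = X ^ k - C t := by
  have h1 : (1 - C t * X ^ k : R[X]) = C 1 - C t * X ^ k := by simp
  rw [h1, reflect_sub, reflect_C, reflect_C_mul, reflect_monomial,
    revAt_le (le_refl k), Nat.sub_self, pow_zero, mul_one, C_1, one_mul]

lemma reflect_q_factor {R : Type*} [CommRing R] (t : R) (k : ℕ) :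
    reflect k (X ^ k - C t : R[X]) = 1 - C t * X ^ k := by
  rw [reflect_sub, reflect_C, reflect_monomial, revAt_le (le_refl k),
    Nat.sub_self, pow_zero]

lemma natDegree_reflect_le {R : Type*} [Semiring R] (p : R[X]) {N : ℕ}
    (h : p.natDegree ≤ N) : (reflect N p).natDegree ≤ N := by
  refine natDegree_le_iff_coeff_eq_zero.mpr fun i hi => ?_
  rw [coeff_reflect, revAt_eq_self_of_lt hi]
  exact coeff_eq_zero_of_natDegree_lt (lt_of_le_of_lt h hi)

/-- Key coprimality: X^j - t and 1 - t X^k are coprime when t^(j+k) ≠ 1. -/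
lemma cop_fac {K : Type*} [Field K] (t : K) (j k : ℕ)
    (h : (t : K) ^ (j + k) ≠ 1) :
    IsCoprime ((X : K[X]) ^ j - C t) (1 - C t * X ^ k) := by
  obtain ⟨d₂, hd₂⟩ := sub_dvd_pow_sub_pow ((X : K[X]) ^ j) (C t) k
  obtain ⟨d₁, hd₁⟩ := sub_dvd_pow_sub_pow (1 : K[X]) (C t * X ^ k) j
  have hc : (1 : K) - t ^ (j + k) ≠ 0 := sub_ne_zero.mpr (Ne.symm h)
  have key : (C t) ^ j * d₂ * ((X : K[X]) ^ j - C t) + d₁ * (1 - C t * X ^ k)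
      = C (1 - t ^ (j + k)) := by
    have hC : (C (1 - t ^ (j + k)) : K[X]) = 1 - (C t) ^ (j + k) := by
      rw [map_sub, map_one, map_pow]
    rw [hC]
    linear_combination (-(C t : K[X]) ^ j) * hd₂ - hd₁
  refine ⟨C (1 - t ^ (j + k))⁻¹ * ((C t) ^ j * d₂),
    C (1 - t ^ (j + k))⁻¹ * d₁, ?_⟩
  have h1 : (C ((1 - t ^ (j + k))⁻¹) : K[X]) * C (1 - t ^ (j + k)) = 1 := by
    rw [← C_mul, inv_mul_cancel₀ hc, C_1]
  linear_combination (C ((1 - t ^ (j + k))⁻¹) : K[X]) * key + h1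

/-- If φ_n = a·q_n + b·p_n with a, b of z-degree ≤ m-2, then
b(z,t) = -z^(m-2) a(1/z, t), i.e. the z-coefficients of b are the negated
reversal of those of a. -/
theorem stmt8 (n s m : ℕ) (hn : 3 ≤ n) (hodd : Odd n) (hs : n = 2 * s - 1)
    (hm : m = s ^ 2) (a b : Polynomial (Polynomial ℤ))
    (ha : a.natDegree ≤ m - 2) (hb : b.natDegree ≤ m - 2)
    (hdecomp : phiOdd n m = a * qOdd s + b * pOdd s) :
    ∀ k ≤ m - 2, b.coeff k = - a.coeff (m - 2 - k) := by
  have hs2 : 2 ≤ s := by omega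
  have hm4 : 4 ≤ m := by
    have h4 : 2 ^ 2 ≤ s ^ 2 := Nat.pow_le_pow_left hs2 2
    omega
  -- degree bounds for pOdd and qOdd
  have hsum : ∑ i ∈ Icc 1 s, (2 * i - 1) = m := by rw [sum_odds, hm]
  have hdp : (pOdd s).natDegree ≤ m := by
    refine le_trans (natDegree_prod_le _ _) (le_trans (Finset.sum_le_sum
      fun i _ => natDegree_p_factor (X : Polynomial ℤ) (2 * i - 1)) hsum.le)
  have hdq : (qOdd s).natDegree ≤ m := by
    refine le_trans (natDegree_prod_le _ _) (le_trans (Finset.sum_le_sum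
      fun i _ => natDegree_q_factor (X : Polynomial ℤ) (2 * i - 1)) hsum.le)
  -- reflection identities
  have hrp : reflect m (pOdd s) = qOdd s := by
    unfold pOdd qOdd
    rw [← hsum, reflect_prod' _ _ _ fun i _ => natDegree_p_factor _ _]
    exact Finset.prod_congr rfl fun i _ => reflect_p_factor _ _
  have hrq : reflect m (qOdd s) = pOdd s := by
    unfold pOdd qOdd
    rw [← hsum, reflect_prod' _ _ _ fun i _ => natDegree_q_factor _ _]
    exact Finset.prod_congr rfl fun i _ => reflect_q_factor _ _
  -- reflection of phi
  have hphi : reflect (m - 2 + m) (phiOdd n m) = - phiOdd n m := by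
    unfold phiOdd
    have h1 : (X : Polynomial (Polynomial ℤ)) ^ (m - 2) * (X ^ 2 - 1) * C (rOdd n)
        = C (rOdd n) * (X ^ m - X ^ (m - 2)) := by
      have : (X : Polynomial (Polynomial ℤ)) ^ (m - 2) * X ^ 2 = X ^ m := by
        rw [← pow_add]; congr 1; omega
      rw [mul_sub, this, mul_one]; ring
    rw [h1, reflect_C_mul, reflect_sub, reflect_monomial, reflect_monomial,
      revAt_le (by omega : m ≤ m - 2 + m), revAt_le (by omega : m - 2 ≤ m - 2 + m)]
    have e1 : m - 2 + m - m = m - 2 := by omega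
    have e2 : m - 2 + m - (m - 2) = m := by omega
    rw [e1, e2]; ring
  -- reflect the decomposition
  set A := reflect (m - 2) a with hA
  set B := reflect (m - 2) b with hB
  have H : reflect (m - 2 + m) (phiOdd n m) = A * pOdd s + B * qOdd s := by
    rw [hdecomp, reflect_add, reflect_mul a _ ha hdq, reflect_mul b _ hb hdp,
      hrp, hrq]
  have e : A * pOdd s + B * qOdd s = -(a * qOdd s + b * pOdd s) := by
    rw [← H, hphi, hdecomp]
  have key : (b + A) * pOdd s = (-(a + B)) * qOdd s := by linear_combination e
  -- move to the fraction field
  set K := FractionRing (Polynomial ℤ)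
  set f := algebraMap (Polynomial ℤ) K with hf
  have hfinj : Function.Injective f := IsFractionRing.injective _ _
  have ht : ∀ N : ℕ, N ≠ 0 → (f X) ^ N ≠ 1 := by
    intro N hN h1
    rw [← map_pow, ← map_one f] at h1
    have h2 := hfinj h1
    have h3 := congrArg natDegree h2
    rw [natDegree_X_pow, natDegree_one] at h3
    exact hN h3
  have hpK : (pOdd s).map f = ∏ i ∈ Icc 1 s, (1 - C (f X) * X ^ (2 * i - 1)) := by
    unfold pOdd
    rw [Polynomial.map_prod]
    exact Finset.prod_congr rfl fun i _ => by
      simp [Polynomial.map_sub, Polynomial.map_mul, Polynomial.map_pow]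
  have hqK : (qOdd s).map f = ∏ i ∈ Icc 1 s, (X ^ (2 * i - 1) - C (f X)) := by
    unfold qOdd
    rw [Polynomial.map_prod]
    exact Finset.prod_congr rfl fun i _ => by
      simp [Polynomial.map_sub, Polynomial.map_pow]
  have cop : IsCoprime ((qOdd s).map f) ((pOdd s).map f) := by
    rw [hqK, hpK]
    refine IsCoprime.prod_left fun i hi => IsCoprime.prod_right fun j hj => ?_
    have hi1 : 1 ≤ i := (Finset.mem_Icc.mp hi).1
    have hj1 : 1 ≤ j := (Finset.mem_Icc.mp hj).1
    exact cop_fac (f X) (2 * i - 1) (2 * j - 1) (ht _ (by omega))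
  have hqKdeg : ((qOdd s).map f).natDegree = m := by
    rw [hqK, natDegree_prod _ _ fun i hi =>
      X_pow_sub_C_ne_zero (by have := (Finset.mem_Icc.mp hi).1; omega) (f X)]
    rw [← hsum]
    exact Finset.sum_congr rfl fun i _ => natDegree_X_pow_sub_C
  -- divisibility & degree argument
  have keyK : ((b + A).map f) * ((pOdd s).map f)
      = ((-(a + B)).map f) * ((qOdd s).map f) := by
    rw [← Polynomial.map_mul, key, Polynomial.map_mul]
  have hdvd : ((qOdd s).map f) ∣ ((b + A).map f) * ((pOdd s).map f) :=
    ⟨(-(a + B)).map f, by rw [keyK]; ring⟩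
  have hdvd2 : ((qOdd s).map f) ∣ ((b + A).map f) := cop.dvd_of_dvd_mul_right hdvd
  have hbA : (b + A).natDegree ≤ m - 2 :=
    le_trans (natDegree_add_le _ _) (max_le hb (natDegree_reflect_le a ha))
  have hzero : ((b + A).map f) = 0 := by
    by_contra hne
    have hle := Polynomial.natDegree_le_of_dvd hdvd2 hne
    have hle2 : ((b + A).map f).natDegree ≤ m - 2 :=
      natDegree_map_le.trans hbA
    omega
  have hbA0 : b + A = 0 := by
    apply Polynomial.map_injective f hfinj
    rw [hzero, Polynomial.map_zero]
  have hbeq : b = -A := eq_neg_of_add_eq_zero_left hbA0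
  intro k hk
  rw [hbeq, coeff_neg, hA, coeff_reflect, revAt_le hk]
end

section
/- For n = 3 (s = 2, m = 4): the ideal of ℤ[z,t] generated by p_3(z,t) = (1−tz)(1−tz³) and q_3(z,t) = (z−t)(z³−t) contains the polynomial φ_3(z,t) = z²(z²−1)(1−t⁴); i.e., there exist a, b ∈ ℤ[z,t] of z-degree ≤ 2 with φ_3 = a·q_3 + b·p_3. (Conjecture 1, case n = 3.) -/
open Polynomial

/- We work in ℤ[t][z]: the outer variable `X` is z, and `C X` is t. -/

theorem stmt13 :
    ∃ a b : Polynomial (Polynomial ℤ), a.natDegree ≤ 2 ∧ b.natDegree ≤ 2 ∧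
      X ^ 2 * (X ^ 2 - 1) * C (1 - X ^ 4) =
        a * ((X - C X) * (X ^ 3 - C X)) + b * ((1 - C X * X) * (1 - C X * X ^ 3)) := by
  refine ⟨1 - C X * X + C (X ^ 2) * X ^ 2, C X * X - X ^ 2 - C (X ^ 2), ?_, ?_, ?_⟩
  · compute_degree
  · compute_degree
  · simp only [map_sub, map_one, map_pow]
    ring
end

section
/- For n = 4 (s = 2, m = 6): the ideal of ℤ[z,t] generated by p_4(z,t) = (1−tz²)(1−tz⁴) and q_4(z,t) = (z²−t)(z⁴−t) contains φ_4(z,t) = z⁴(z²−1)(1+t)(1−t²)(1−t³); i.e., there exist a, b ∈ ℤ[z,t] of z-degree ≤ 4 with φ_4 = a·q_4 + b·p_4. (Conjecture 1, case n = 4.) -/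
open Polynomial

/- We work in ℤ[t][z]: the outer variable `X` is z, and `C X` is t. -/

theorem stmt14 :
    ∃ a b : Polynomial (Polynomial ℤ), a.natDegree ≤ 4 ∧ b.natDegree ≤ 4 ∧
      X ^ 4 * (X ^ 2 - 1) * C ((1 + X) * (1 - X ^ 2) * (1 - X ^ 3)) =
        a * ((X ^ 2 - C X) * (X ^ 4 - C X)) +
          b * ((1 - C X * X ^ 2) * (1 - C X * X ^ 4)) := by
  refine ⟨C (1 - X ^ 2) + C (X ^ 3 - X) * X ^ 2 + C (X ^ 2 - X ^ 4) * X ^ 4,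
    C (X ^ 4 - X ^ 2) + C (X - X ^ 3) * X ^ 2 + C (X ^ 2 - 1) * X ^ 4, ?_, ?_, ?_⟩
  · compute_degree
  · compute_degree
  · simp only [map_add, map_sub, map_mul, map_pow, map_one, map_neg]
    ring
end

section
/- For n = 3: the ideal I_3 = ⟨p_3, q_3⟩ of ℤ[z,t] intersected with ℤ[t] equals the principal ideal of ℤ[t] generated by (1−t²)(1−t²)(1−t⁴) = (1−t²)²(1−t⁴). (Conjecture 2, case n = 3.) -/
open Polynomial

private lemma prime_Xsq_add_one : Prime (X ^ 2 + 1 : Polynomial ℤ) := by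
  have hcyc : (Polynomial.cyclotomic 4 ℤ) = X ^ 2 + 1 := by
    have h : (4:ℕ) = 2 ^ (1+1) := by norm_num
    rw [h, cyclotomic_prime_pow_eq_geom_sum Nat.prime_two]
    simp [Finset.sum_range_succ]
    ring
  have hirr : Irreducible (X ^ 2 + 1 : Polynomial ℤ) := hcyc ▸ cyclotomic.irreducible (by norm_num)
  exact (UniqueFactorizationMonoid.irreducible_iff_prime).mp hirr

theorem stmt15 (f : Polynomial ℤ) :
    (C f ∈ Ideal.span {(1 - C X * X) * (1 - C X * X ^ 3),
        (X - C X) * (X ^ 3 - C X)} : Prop) ↔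
      (1 - X ^ 2) * (1 - X ^ 2) * (1 - X ^ 4) ∣ f := by
  constructor
  · intro hmem
    rw [Ideal.mem_span_pair] at hmem
    obtain ⟨a, b, hab⟩ := hmem
    -- Step A : substitute z := t
    have hA : (X ^ 2 + 1 : Polynomial ℤ) ∣ f := by
      have h := congrArg (Polynomial.eval (X : Polynomial ℤ)) hab
      simp only [eval_add, eval_mul, eval_sub, eval_pow, eval_X, eval_C, eval_one] at h
      exact ⟨a.eval X * (1 - X ^ 2) ^ 2, by linear_combination -h⟩
    -- generic step at t := r (r = 1 or -1)
    -- Step B/C for t = 1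
    have key1 : ∃ h1 : Polynomial (Polynomial ℤ), a + b = (C X - 1) * h1 := by
      have hmap := congrArg (Polynomial.map (Polynomial.evalRingHom (1:ℤ))) hab
      simp only [Polynomial.map_add, Polynomial.map_mul, Polynomial.map_sub, Polynomial.map_pow,
        Polynomial.map_one, Polynomial.map_C, Polynomial.map_X, coe_evalRingHom, eval_X,
        map_one] at hmap
      set A := a.map (Polynomial.evalRingHom (1:ℤ)) with hA'
      set B := b.map (Polynomial.evalRingHom (1:ℤ)) with hB'
      have h2 : (A + B) * ((1 - X) * (1 - X ^ 3)) = C (f.eval 1) := by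
        linear_combination hmap
      have hdne : ((1 - X) * (1 - X ^ 3) : Polynomial ℤ) ≠ 0 := by
        intro h0
        have := congrArg (Polynomial.eval 0) h0
        simp at this
      have hzero : A + B = 0 := by
        by_contra hne
        have hdeg := natDegree_mul hne hdne
        rw [h2] at hdeg
        have hd4 : ((1 - X) * (1 - X ^ 3) : Polynomial ℤ).natDegree = 4 := by
          compute_degree!
        simp [hd4] at hdeg
      have hdvd : (C (X - 1) : Polynomial (Polynomial ℤ)) ∣ (a + b) := by
        rw [C_dvd_iff_dvd_coeff]
        intro n
        rw [← C_1, dvd_iff_isRoot]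
        have := congrArg (fun P => Polynomial.coeff P n) hzero
        simpa [hA', hB', coeff_map, IsRoot] using this
      obtain ⟨h1, hh1⟩ := hdvd
      exact ⟨h1, by rw [hh1]; simp [map_sub]⟩
    have key2 : ∃ h2 : Polynomial (Polynomial ℤ), a + b = (C X + 1) * h2 := by
      have hmap := congrArg (Polynomial.map (Polynomial.evalRingHom (-1:ℤ))) hab
      simp only [Polynomial.map_add, Polynomial.map_mul, Polynomial.map_sub, Polynomial.map_pow,
        Polynomial.map_one, Polynomial.map_C, Polynomial.map_X, coe_evalRingHom, eval_X,
        map_one, C_neg, C_1] at hmap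
      set A := a.map (Polynomial.evalRingHom (-1:ℤ)) with hA'
      set B := b.map (Polynomial.evalRingHom (-1:ℤ)) with hB'
      have h2 : (A + B) * ((1 + X) * (1 + X ^ 3)) = C (f.eval (-1)) := by
        linear_combination hmap
      have hdne : ((1 + X) * (1 + X ^ 3) : Polynomial ℤ) ≠ 0 := by
        intro h0
        have := congrArg (Polynomial.eval 0) h0
        simp at this
      have hzero : A + B = 0 := by
        by_contra hne
        have hdeg := natDegree_mul hne hdne
        rw [h2] at hdeg
        have hd4 : ((1 + X) * (1 + X ^ 3) : Polynomial ℤ).natDegree = 4 := by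
          compute_degree!
        simp [hd4] at hdeg
      have hdvd : (C (X + 1) : Polynomial (Polynomial ℤ)) ∣ (a + b) := by
        rw [C_dvd_iff_dvd_coeff]
        intro n
        have hr : (X + 1 : Polynomial ℤ) = X - C (-1) := by simp
        rw [hr, dvd_iff_isRoot]
        have := congrArg (fun P => Polynomial.coeff P n) hzero
        simpa [hA', hB', coeff_map, IsRoot] using this
      obtain ⟨h2', hh2⟩ := hdvd
      exact ⟨h2', by rw [hh2]; simp [map_add]⟩
    obtain ⟨h1, hh1⟩ := key1
    obtain ⟨h2, hh2⟩ := key2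
    -- f(1) = 0 and f(-1) = 0, extract f = (X-1) f1 etc.
    -- (X-1)^3 ∣ f
    have hP1 : (X - 1 : Polynomial ℤ) ^ 3 ∣ f := by
      have keyC : (C X - 1) * (h1 * ((1 - C X * X) * (1 - C X * X ^ 3))
          + (C X + 1) * b * (1 - X ^ 4)) = C f := by
        linear_combination hab - ((1 - C X * X) * (1 - C X * X ^ 3)) * hh1
      have hf1 : (X - C 1 : Polynomial ℤ) ∣ f := by
        rw [dvd_iff_isRoot]
        have := congrArg (Polynomial.eval (0 : Polynomial ℤ)) keyC
        simp only [eval_mul, eval_add, eval_sub, eval_pow, eval_X, eval_C, eval_one] at this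
        have h0 := congrArg (Polynomial.eval (1 : ℤ)) this.symm
        simpa [IsRoot] using h0
      obtain ⟨f1, hf1⟩ := hf1
      have hCf : C f = (C X - 1) * C f1 := by
        rw [hf1]; simp [map_mul, map_sub]
      have hcancel : h1 * ((1 - C X * X) * (1 - C X * X ^ 3))
          + (C X + 1) * b * (1 - X ^ 4) = C f1 := by
        have hne : (C X - 1 : Polynomial (Polynomial ℤ)) ≠ 0 := by
          have : (C X - 1 : Polynomial (Polynomial ℤ)) = C (X - 1) := by simp [map_sub]
          rw [this, Ne, C_eq_zero]
          exact X_sub_C_ne_zero 1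
        apply mul_left_cancel₀ hne
        rw [keyC, hCf]
      have hev := congrArg (Polynomial.eval (1 : Polynomial ℤ)) hcancel
      simp only [eval_add, eval_mul, eval_sub, eval_pow, eval_X, eval_C, eval_one, one_pow] at hev
      have hsq : (X - 1 : Polynomial ℤ) ^ 2 ∣ f1 :=
        ⟨h1.eval 1, by linear_combination -hev⟩
      obtain ⟨w, hw⟩ := hsq
      exact ⟨w, by rw [hf1, hw]; simp only [C_1]; ring⟩
    have hP2 : (X + 1 : Polynomial ℤ) ^ 3 ∣ f := by
      have keyC : (C X + 1) * (h2 * ((1 - C X * X) * (1 - C X * X ^ 3))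
          + (C X - 1) * b * (1 - X ^ 4)) = C f := by
        linear_combination hab - ((1 - C X * X) * (1 - C X * X ^ 3)) * hh2
      have hf2 : (X - C (-1) : Polynomial ℤ) ∣ f := by
        rw [dvd_iff_isRoot]
        have := congrArg (Polynomial.eval (0 : Polynomial ℤ)) keyC
        simp only [eval_mul, eval_add, eval_sub, eval_pow, eval_X, eval_C, eval_one] at this
        have h0 := congrArg (Polynomial.eval (-1 : ℤ)) this.symm
        simpa [IsRoot] using h0
      obtain ⟨f2, hf2⟩ := hf2
      have hf2' : f = (X + 1) * f2 := by rw [hf2]; simp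
      have hCf : C f = (C X + 1) * C f2 := by
        rw [hf2']; simp [map_mul, map_add]
      have hcancel : h2 * ((1 - C X * X) * (1 - C X * X ^ 3))
          + (C X - 1) * b * (1 - X ^ 4) = C f2 := by
        have hne : (C X + 1 : Polynomial (Polynomial ℤ)) ≠ 0 := by
          have : (C X + 1 : Polynomial (Polynomial ℤ)) = C (X + 1) := by simp [map_add]
          rw [this, Ne, C_eq_zero]
          intro h0
          have := congrArg (Polynomial.eval (0:ℤ)) h0
          simp at this
        apply mul_left_cancel₀ hne
        rw [keyC, hCf]
      have hev := congrArg (Polynomial.eval (-1 : Polynomial ℤ)) hcancel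
      simp only [eval_add, eval_mul, eval_sub, eval_pow, eval_X, eval_C, eval_one] at hev
      have hsq : (X + 1 : Polynomial ℤ) ^ 2 ∣ f2 :=
        ⟨h2.eval (-1), by linear_combination -hev⟩
      obtain ⟨w, hw⟩ := hsq
      exact ⟨w, by rw [hf2', hw]; ring⟩
    -- combine
    have prime1 : Prime (X - 1 : Polynomial ℤ) := by
      have := Polynomial.prime_X_sub_C (1 : ℤ); simpa using this
    have prime2 : Prime (X + 1 : Polynomial ℤ) := by
      have := Polynomial.prime_X_sub_C (-1 : ℤ); simpa using this
    have prime3 : Prime (X ^ 2 + 1 : Polynomial ℤ) := prime_Xsq_add_one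
    obtain ⟨g1, hg1⟩ := hP1
    have hnd21 : ¬ (X + 1 : Polynomial ℤ) ∣ (X - 1) ^ 3 := by
      intro hd
      have := prime2.dvd_of_dvd_pow hd
      obtain ⟨c, hc⟩ := this
      have := congrArg (Polynomial.eval (-1 : ℤ)) hc
      simp at this
    have hP2' : (X + 1 : Polynomial ℤ) ^ 3 ∣ (X - 1) ^ 3 * g1 := hg1 ▸ hP2
    obtain ⟨g2, hg2⟩ := prime2.pow_dvd_of_dvd_mul_left 3 hnd21 hP2'
    have hf12 : f = (X - 1) ^ 3 * (X + 1) ^ 3 * g2 := by rw [hg1, hg2]; ring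
    have hnd3 : ¬ (X ^ 2 + 1 : Polynomial ℤ) ∣ (X - 1) ^ 3 * (X + 1) ^ 3 := by
      intro hd
      have hd' := (prime3.dvd_mul).mp hd
      rcases hd' with hd' | hd'
      · have h1' := prime3.dvd_of_dvd_pow hd'
        have hdeg := Polynomial.natDegree_le_of_dvd h1' (by
          intro h0
          have := congrArg (Polynomial.eval (0:ℤ)) h0; simp at this)
        have e1 : (X ^ 2 + 1 : Polynomial ℤ).natDegree = 2 := by compute_degree!
        have e2 : (X - 1 : Polynomial ℤ).natDegree = 1 := by compute_degree!
        omega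
      · have h1' := prime3.dvd_of_dvd_pow hd'
        have hdeg := Polynomial.natDegree_le_of_dvd h1' (by
          intro h0
          have := congrArg (Polynomial.eval (0:ℤ)) h0; simp at this)
        have e1 : (X ^ 2 + 1 : Polynomial ℤ).natDegree = 2 := by compute_degree!
        have e2 : (X + 1 : Polynomial ℤ).natDegree = 1 := by compute_degree!
        omega
    have hP3' : (X ^ 2 + 1 : Polynomial ℤ) ^ 1 ∣ ((X - 1) ^ 3 * (X + 1) ^ 3) * g2 := by
      rw [pow_one]
      exact hf12 ▸ hA
    obtain ⟨g3, hg3⟩ := prime3.pow_dvd_of_dvd_mul_left 1 hnd3 hP3'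
    rw [pow_one] at hg3
    exact ⟨-g3, by rw [hf12, hg3]; ring⟩
  · rintro ⟨k, hk⟩
    have hg : C ((1 - X ^ 2) * (1 - X ^ 2) * (1 - X ^ 4) : Polynomial ℤ) ∈
        Ideal.span {((1 - C X * X) * (1 - C X * X ^ 3) : Polynomial (Polynomial ℤ)),
          (X - C X) * (X ^ 3 - C X)} := by
      rw [Ideal.mem_span_pair]
      refine ⟨((1 - 2 * C X ^ 2 - C X ^ 4 + (C X - C X ^ 3) * X + (C X ^ 2 - C X ^ 4) * X ^ 2
        + (C X + C X ^ 3) * X ^ 3 : Polynomial (Polynomial ℤ))),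
        ((C X ^ 2 + 2 * C X ^ 4 - C X ^ 6 + (C X ^ 3 - C X ^ 5) * X + (C X ^ 2 - C X ^ 4) * X ^ 2
        - (C X ^ 3 + C X ^ 5) * X ^ 3 : Polynomial (Polynomial ℤ))), ?_⟩
      simp only [map_mul, map_sub, map_pow, map_one]
      ring
    rw [hk, map_mul]
    exact Ideal.mul_mem_right _ _ hg
end

section
/- For n = 2: the ideal I_2 = ⟨p_2, q_2⟩ of ℤ[z,t], where p_2 = 1 − t z² and q_2 = z² − t, intersected with ℤ[t] equals the principal ideal generated by (1+t)(1−t) = 1 − t². (Conjecture 2 for n = 2, where the claimed generator for n ≡ 2 mod 4 is (1+t)∏_{i=1}^{n−1}(1−t^i) = (1+t)(1−t).) -/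
open Polynomial

/-! In `ℤ[t][z]` (outer variable `X` is `z`, `C X` is `t`) we have
`1 - t z² = (1 - t²) - t (z² - t)`, so `I₂ = ⟨1 - t², z² - t⟩`. As `z² - t` is monic of positive
degree, the constant coefficient of the remainder modulo `z² - t` is an `ℤ[t]`-linear retraction
onto `ℤ[t]` that kills `z² - t`; so a constant in `⟨a, z² - t⟩` is a multiple of `a`. -/

theorem Polynomial.C_mem_span_C_monic_iff {R : Type*} [CommRing R] {a r : R} {q : R[X]}
    (hq : q.Monic) (hdeg : 0 < q.degree) :
    C r ∈ Ideal.span {C a, q} ↔ a ∣ r := by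
  nontriviality R
  constructor
  · intro h
    obtain ⟨u, v, huv⟩ := Ideal.mem_span_pair.mp h
    have hC : C r %ₘ q = C r :=
      (modByMonic_eq_self_iff hq).mpr (degree_C_le.trans_lt hdeg)
    have hrem : (u * C a + v * q) %ₘ q = a • (u %ₘ q) := by
      rw [add_modByMonic, (modByMonic_eq_zero_iff_dvd hq).mpr (dvd_mul_left q v), add_zero,
        mul_comm, ← smul_eq_C_mul, smul_modByMonic]
    refine ⟨(u %ₘ q).coeff 0, ?_⟩
    rw [huv, hC] at hrem
    simpa using congrArg (coeff · 0) hrem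
  · rintro ⟨b, rfl⟩
    rw [C_mul]
    exact Ideal.mul_mem_right _ _ (Ideal.subset_span (Set.mem_insert _ _))

theorem stmt16 (f : Polynomial ℤ) :
    (C f ∈ Ideal.span {1 - C X * X ^ 2, X ^ 2 - C X} : Prop) ↔
      (1 + X) * (1 - X) ∣ f := by
  have hq : (X ^ 2 - C X : Polynomial ℤ[X]).Monic := monic_X_pow_sub_C _ two_ne_zero
  have hspan : (Ideal.span {1 - C X * X ^ 2, X ^ 2 - C X} : Ideal (Polynomial ℤ[X])) =
      Ideal.span {C ((1 + X) * (1 - X)), X ^ 2 - C X} := by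
    have hp : (1 - C X * X ^ 2 : Polynomial ℤ[X]) =
        C ((1 + X) * (1 - X) : ℤ[X]) + -C (X : ℤ[X]) * (X ^ 2 - C X) := by
      simp only [C_mul, C_add, C_sub, C_1]
      ring
    rw [hp, Ideal.span_pair_add_mul_right]
  rw [hspan, C_mem_span_C_monic_iff hq (by rw [degree_X_pow_sub_C two_pos]; norm_num)]
end

section
/- For n = 1: the ideal I_1 = ⟨p_1, q_1⟩ of ℤ[z,t], where p_1 = 1 − tz and q_1 = z − t, intersected with ℤ[t] equals the principal ideal generated by 1 − t². (Conjecture 2 for n = 1.) -/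
open Polynomial

/- We work in ℤ[t][z]: the outer variable `X` is z, and `C X` is t.
The intersection of I_1 = ⟨p_1, q_1⟩ with ℤ[t] is the principal ideal
generated by 1 - t². -/
theorem stmt17 (f : Polynomial ℤ) :
    (C f ∈ Ideal.span {1 - C X * X, X - C X} : Prop) ↔
      (1 - X ^ 2) ∣ f := by
  constructor
  · intro h
    rw [Ideal.mem_span_pair] at h
    obtain ⟨a, b, hab⟩ := h
    have := congrArg (Polynomial.eval (X : Polynomial ℤ)) hab
    simp only [eval_add, eval_mul, eval_sub, eval_C, eval_X, eval_one, sub_self,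
      mul_zero, add_zero] at this
    exact ⟨a.eval X, by rw [← this]; ring⟩
  · rintro ⟨g, rfl⟩
    rw [Ideal.mem_span_pair]
    refine ⟨C g, C X * C g, ?_⟩
    push_cast [map_mul, map_sub, map_one, map_pow]
    ring
end
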